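/- arXiv:1702.06505 — 2 statements merged into one kernel-verified Lean document; each statement's English description precedes it below -/
import Mathlib

section
/- Under the bid update, the distance between consecutive bids satisfies ‖b(k+1) - b(k)‖² ≤ (β_k²/(2 a_min²)) ‖b(k) - b*‖² + 8 β_k² ȳ², where a_min = min_n a_n and ȳ is the total demand. -/
theorem bid_aux (amin β u t D : ℝ) (hamin0 : 0 < amin)
    (h3 : t ^ 2 ≤ D / (4 * amin ^ 2)) :
    (β * (u - t)) ^ 2 ≤ β ^ 2 / (2 * amin ^ 2) * D + 2 * β ^ 2 * u ^ 2 := by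
  rw [le_div_iff₀ (by positivity)] at h3
  have key : 2 * β ^ 2 * t ^ 2 ≤ β ^ 2 / (2 * amin ^ 2) * D := by
    rw [div_mul_eq_mul_div, le_div_iff₀ (by positivity)]
    nlinarith [sq_nonneg β]
  nlinarith [sq_nonneg (β * (u + t))]


/-- Distance between consecutive bids is upper bounded:
`‖b(k+1) - b(k)‖² ≤ (β²/(2 a_min²)) ‖b(k) - b*‖² + 8 β² ȳ²`. -/
theorem bid_update_distance_bound (N : ℕ) (hN : 1 ≤ N)
    (a c : Fin N → ℝ) (amin β ybar : ℝ)
    (ha : ∀ n, 0 < a n) (hc : ∀ n, 0 ≤ c n)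
    (hamin : ∀ n, amin ≤ a n) (hamin' : ∃ n, a n = amin)
    (hβ0 : 0 < β) (hβ : ∀ n, β < 2 * a n)
    (hybar : 0 ≤ ybar)
    (b b' bstar x xstar : EuclideanSpace ℝ (Fin N))
    (hb : ∀ n, c n ≤ b n)
    (hx : ∀ n, 0 ≤ x n) (hxstar : ∀ n, 0 ≤ xstar n)
    (hxsum : ∑ n, x n = ybar) (hxstarsum : ∑ n, xstar n = ybar)
    (hbstar : ∀ n, bstar n = 2 * a n * xstar n + c n)
    (hb' : ∀ n, b' n = b n + β * (x n - (b n - c n) / (2 * a n))) :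
    ‖b' - b‖ ^ 2 ≤ (β ^ 2 / (2 * amin ^ 2)) * ‖b - bstar‖ ^ 2 + 8 * β ^ 2 * ybar ^ 2 := by
  obtain ⟨n0, hn0⟩ := hamin'
  have hamin0 : 0 < amin := hn0 ▸ ha n0
  have hnormsq : ∀ v : EuclideanSpace ℝ (Fin N), ‖v‖ ^ 2 = ∑ i, v i ^ 2 := by
    intro v
    rw [EuclideanSpace.norm_eq, Real.sq_sqrt (by positivity)]
    simp [sq_abs]
  have hsub : ∀ (u v : EuclideanSpace ℝ (Fin N)) (n : Fin N), (u - v) n = u n - v n :=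
    fun _ _ _ => rfl
  -- pointwise bound
  have key : ∀ n, ((b' - b) n) ^ 2 ≤
      (β ^ 2 / (2 * amin ^ 2)) * ((b - bstar) n) ^ 2 + 2 * β ^ 2 * (x n - xstar n) ^ 2 := by
    intro n
    have han := ha n
    have h1 : (b' - b) n = β * ((x n - xstar n) - (b n - bstar n) / (2 * a n)) := by
      rw [hsub, hb' n, hbstar n]
      field_simp
      ring
    rw [h1, hsub]
    set u := x n - xstar n
    set t := (b n - bstar n) / (2 * a n) with ht
    set D := (b n - bstar n) ^ 2 with hD
    have h3 : t ^ 2 ≤ D / (4 * amin ^ 2) := by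
      rw [ht, hD, div_pow]
      exact div_le_div_of_nonneg_left (sq_nonneg _) (by positivity)
        (by nlinarith [hamin n])
    have := bid_aux amin β u t D hamin0 h3
    linarith [this]
  have hsumsq : ∀ w : EuclideanSpace ℝ (Fin N), (∀ n, 0 ≤ w n) → (∑ n, w n = ybar) →
      ∑ n, (w n) ^ 2 ≤ ybar ^ 2 := by
    intro w hw hws
    calc ∑ n, (w n) ^ 2 ≤ ∑ n, w n * ybar := by
          apply Finset.sum_le_sum
          intro n _
          have hle : w n ≤ ybar := by
            rw [← hws]
            exact Finset.single_le_sum (fun i _ => hw i) (Finset.mem_univ n)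
          nlinarith [hw n]
      _ = ybar * ybar := by rw [← Finset.sum_mul, hws]
      _ = ybar ^ 2 := by ring
  have hdiff : ∑ n, (x n - xstar n) ^ 2 ≤ 2 * ybar ^ 2 := by
    calc ∑ n, (x n - xstar n) ^ 2 ≤ ∑ n, ((x n) ^ 2 + (xstar n) ^ 2) := by
          apply Finset.sum_le_sum
          intro n _
          nlinarith [hx n, hxstar n]
      _ = ∑ n, (x n) ^ 2 + ∑ n, (xstar n) ^ 2 := Finset.sum_add_distrib
      _ ≤ ybar ^ 2 + ybar ^ 2 := add_le_add (hsumsq x hx hxsum) (hsumsq xstar hxstar hxstarsum)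
      _ = 2 * ybar ^ 2 := by ring
  calc ‖b' - b‖ ^ 2 = ∑ n, ((b' - b) n) ^ 2 := hnormsq _
    _ ≤ ∑ n, ((β ^ 2 / (2 * amin ^ 2)) * ((b - bstar) n) ^ 2 + 2 * β ^ 2 * (x n - xstar n) ^ 2) :=
        Finset.sum_le_sum (fun n _ => key n)
    _ = (β ^ 2 / (2 * amin ^ 2)) * (∑ n, ((b - bstar) n) ^ 2)
          + 2 * β ^ 2 * (∑ n, (x n - xstar n) ^ 2) := by
        rw [Finset.sum_add_distrib, ← Finset.mul_sum, ← Finset.mul_sum]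
    _ ≤ (β ^ 2 / (2 * amin ^ 2)) * ‖b - bstar‖ ^ 2 + 8 * β ^ 2 * ybar ^ 2 := by
        rw [hnormsq (b - bstar)]
        have h5 : 2 * β ^ 2 * (∑ n, (x n - xstar n) ^ 2) ≤ 8 * β ^ 2 * ybar ^ 2 := by
          nlinarith [sq_nonneg β, sq_nonneg ybar]
        linarith
end

section
/- If the stepsize satisfies α ≤ β_k ≤ B(r) where B(r) = (1/(2a_max)) (1/(2a_min²) + 16ȳ²/r²)^{-1}, and ‖b(k) - b*‖ ≥ r, then combining the angle bound and the consecutive-distance bound yields the contraction ‖b(k+1) - b*‖² ≤ (1 - β_k/(2 a_max)) ‖b(k) - b*‖². -/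
/-! Expanding `‖b' - b*‖² = ‖b' - b‖² - 2⟪b' - b, b* - b⟫ + ‖b - b*‖²`, the angle bound
turns the contraction into the step bound `‖b' - b‖² ≤ (β / (2 a_max)) ‖b - b*‖²`. The
distance bound gives this once its additive term `8 β² ȳ²` is absorbed into the quadratic one,
which is possible at distance at least `r` from `b*`: there `8 ȳ² ≤ (16 ȳ² / r²) ‖b - b*‖²`,
and `β ≤ B(r)` then says exactly that the resulting coefficient is small enough. -/

theorem norm_sub_sq_le_one_sub_mul_of_inner_of_norm_sq
    {E : Type*} [NormedAddCommGroup E] [InnerProductSpace ℝ E] {x y z : E} {p : ℝ}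
    (hangle : p * ‖x - z‖ ^ 2 ≤ inner ℝ (y - x) (z - x))
    (hstep : ‖y - x‖ ^ 2 ≤ p * ‖x - z‖ ^ 2) :
    ‖y - z‖ ^ 2 ≤ (1 - p) * ‖x - z‖ ^ 2 := by
  have hexpand : ‖y - z‖ ^ 2 = ‖y - x‖ ^ 2 - 2 * inner ℝ (y - x) (z - x) + ‖x - z‖ ^ 2 := by
    rw [show y - z = (y - x) - (z - x) by abel, norm_sub_sq_real, norm_sub_rev z x]
  rw [hexpand]
  linarith

theorem mul_le_of_le_mul_inv_of_pos {a b c : ℝ} (ha : 0 < a) (hc : 0 ≤ c)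
    (h : a ≤ b * c⁻¹) : a * c ≤ b := by
  have hc' : 0 < c := hc.lt_of_ne fun hc0 ↦ by
    rw [← hc0, inv_zero, mul_zero] at h
    exact ha.not_ge h
  exact (le_mul_inv_iff₀ hc').1 h

theorem mul_add_eight_mul_sq_le_of_sq_le {c y r X : ℝ} (hr : r ≠ 0) (hX : r ^ 2 ≤ X) :
    c * X + 8 * y ^ 2 ≤ (c + 16 * y ^ 2 / r ^ 2) * X := by
  have hr2 : 0 < r ^ 2 := by positivity
  have hXr : 1 ≤ X / r ^ 2 := (one_le_div hr2).2 hX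
  have : 8 * y ^ 2 ≤ 16 * y ^ 2 * (X / r ^ 2) := by nlinarith [sq_nonneg y]
  calc c * X + 8 * y ^ 2 ≤ c * X + 16 * y ^ 2 * (X / r ^ 2) := by linarith
    _ = (c + 16 * y ^ 2 / r ^ 2) * X := by ring

theorem bid_update_contraction_general (N : ℕ) (amin amax ybar r α β : ℝ)
    (hr : 0 < r)
    (hα : 0 < α) (hαβ : α ≤ β)
    (hβB : β ≤ (1 / (2 * amax)) * (1 / (2 * amin ^ 2) + 16 * ybar ^ 2 / r ^ 2)⁻¹)
    (b b' bstar : EuclideanSpace ℝ (Fin N))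
    (hangle : (β / (2 * amax)) * ‖b - bstar‖ ^ 2 ≤ (inner ℝ (b' - b) (bstar - b) : ℝ))
    (hdist : ‖b' - b‖ ^ 2 ≤ (β ^ 2 / (2 * amin ^ 2)) * ‖b - bstar‖ ^ 2
      + 8 * β ^ 2 * ybar ^ 2)
    (hfar : r ≤ ‖b - bstar‖) :
    ‖b' - bstar‖ ^ 2 ≤ (1 - β / (2 * amax)) * ‖b - bstar‖ ^ 2 := by
  set X := ‖b - bstar‖ ^ 2
  set C := 1 / (2 * amin ^ 2) + 16 * ybar ^ 2 / r ^ 2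
  have hβ : 0 < β := hα.trans_le hαβ
  have hX : r ^ 2 ≤ X := pow_le_pow_left₀ hr.le hfar 2
  have hβC : β * C ≤ 1 / (2 * amax) := mul_le_of_le_mul_inv_of_pos hβ (by positivity) hβB
  refine norm_sub_sq_le_one_sub_mul_of_inner_of_norm_sq hangle (hdist.trans ?_)
  calc β ^ 2 / (2 * amin ^ 2) * X + 8 * β ^ 2 * ybar ^ 2
      = β ^ 2 * (1 / (2 * amin ^ 2) * X + 8 * ybar ^ 2) := by ring
    _ ≤ β ^ 2 * (C * X) := by gcongr; exact mul_add_eight_mul_sq_le_of_sq_le hr.ne' hX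
    _ = β * (β * C) * X := by ring
    _ ≤ β * (1 / (2 * amax)) * X := by gcongr
    _ = β / (2 * amax) * X := by ring

/-- Contraction step: if `α ≤ β ≤ B(r)` with
`B(r) = (1/(2 a_max)) (1/(2 a_min²) + 16 ȳ²/r²)⁻¹`, and `‖b(k) - b*‖ ≥ r`, then combining
the angle bound and the consecutive-distance bound yields
`‖b(k+1) - b*‖² ≤ (1 - β/(2 a_max)) ‖b(k) - b*‖²`. -/
theorem bid_update_contraction (N : ℕ) (amin amax ybar r α β : ℝ)
    (hamin : 0 < amin) (hle : amin ≤ amax) (hybar : 0 ≤ ybar) (hr : 0 < r)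
    (hα : 0 < α) (hαβ : α ≤ β)
    (hβB : β ≤ (1 / (2 * amax)) * (1 / (2 * amin ^ 2) + 16 * ybar ^ 2 / r ^ 2)⁻¹)
    (b b' bstar : EuclideanSpace ℝ (Fin N))
    (hangle : (β / (2 * amax)) * ‖b - bstar‖ ^ 2 ≤ (inner ℝ (b' - b) (bstar - b) : ℝ))
    (hdist : ‖b' - b‖ ^ 2 ≤ (β ^ 2 / (2 * amin ^ 2)) * ‖b - bstar‖ ^ 2
      + 8 * β ^ 2 * ybar ^ 2)
    (hfar : r ≤ ‖b - bstar‖) :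
    ‖b' - bstar‖ ^ 2 ≤ (1 - β / (2 * amax)) * ‖b - bstar‖ ^ 2 :=
  bid_update_contraction_general N amin amax ybar r α β hr hα hαβ hβB b b' bstar hangle hdist hfar
end
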